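/- Let a, b, c, d be affinely independent points of EuclideanSpace ℝ (Fin 3). Then it is not the case that both ∠ a b d + ∠ a b c > π and ∠ d a b + ∠ b a c > π hold (i.e., face A=bdc cannot fail at b while face B=cda fails at a). -/

import Mathlib

open EuclideanGeometry Real

theorem EuclideanGeometry.angle_add_angle_le_pi {V P : Type*} [NormedAddCommGroup V]
    [InnerProductSpace ℝ V] [MetricSpace P] [NormedAddTorsor V P] {p₁ p₂ : P} (p₃ : P)
    (h : p₂ ≠ p₁) : ∠ p₁ p₂ p₃ + ∠ p₃ p₁ p₂ ≤ π := by
  linarith [angle_add_angle_add_angle_eq_pi p₃ h, angle_nonneg p₂ p₃ p₁]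

/-- Face `A = bdc` cannot fail at `b` while face `B = cda` fails at `a`. -/
theorem not_opposite_failures
    (a b c d : EuclideanSpace ℝ (Fin 3))
    (h : AffineIndependent ℝ ![a, b, c, d]) :
    ¬ (∠ a b d + ∠ a b c > π ∧ ∠ d a b + ∠ b a c > π) := by
  have hba : b ≠ a := by simpa using h.injective.ne (show (1 : Fin 4) ≠ 0 by decide)
  rintro ⟨hb, ha⟩
  have triangle_abd := angle_add_angle_le_pi d hba
  have triangle_abc := angle_add_angle_le_pi c hba
  rw [angle_comm b a c] at ha
  linarith
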